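/- Let ρ ≥ 1/2, s ≥ 0, s0 ∈ ℝ with s + ρ ≥ 1 and s0 < s + 2ρ - 5/2. Then the sum J = ∑_{n, n3 ∈ ℤ} ⟨n⟩^{-(2ρ - 2s0 - 2)} * ⟨n - n3⟩^{-(2ρ - 2 + 2s)} * ⟨n3⟩^{-(2ρ + 2s)} is finite, where ⟨m⟩ = (1+m^2)^{1/2}. -/

import Mathlib

noncomputable def jap (m : ℤ) : ℝ := Real.sqrt (1 + (m : ℝ) ^ 2)

lemma jap_pos (m : ℤ) : 0 < jap m := by
  unfold jap; positivity

lemma jap_neg (m : ℤ) : jap (-m) = jap m := by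
  unfold jap; push_cast; ring_nf

lemma div_le_jap (m : ℤ) : (1 + |(m : ℝ)|) / Real.sqrt 2 ≤ jap m := by
  rw [div_le_iff₀ (by positivity)]
  unfold jap
  rw [← Real.sqrt_mul (by positivity)]
  rw [show (1:ℝ) + |(m:ℝ)| = Real.sqrt ((1 + |(m:ℝ)|) ^ 2) by
    rw [Real.sqrt_sq (by positivity)]]
  apply Real.sqrt_le_sqrt
  nlinarith [sq_abs (m:ℝ), sq_nonneg (1 - |(m:ℝ)|), abs_nonneg (m:ℝ)]

/-- `⟨x+y⟩ ≤ √2 ⟨x⟩ ⟨y⟩`. -/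
lemma jap_add_le (x y : ℤ) : jap (x + y) ≤ Real.sqrt 2 * jap x * jap y := by
  unfold jap
  rw [mul_assoc, ← Real.sqrt_mul (by positivity), ← Real.sqrt_mul (by norm_num)]
  apply Real.sqrt_le_sqrt
  push_cast
  nlinarith [sq_nonneg ((x:ℝ) - y), sq_nonneg ((x:ℝ) * y)]

set_option maxHeartbeats 1000000 in
lemma summable_jap_rpow {t : ℝ} (ht : 1 < t) :
    Summable (fun n : ℤ => jap n ^ (-t)) := by
  have hnat0 : Summable (fun n : ℕ => ((n : ℝ) + 1) ^ (-t)) := by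
    have h0 := (Real.summable_nat_rpow (p := -t)).mpr (by linarith)
    have h := (summable_nat_add_iff (f := fun n : ℕ => (n : ℝ) ^ (-t)) 1).mpr h0
    refine h.congr fun n => ?_
    norm_cast
  have hnat : Summable (fun n : ℕ => jap (n : ℤ) ^ (-t)) := by
    apply Summable.of_nonneg_of_le (fun n => Real.rpow_nonneg (jap_pos _).le _)
      (fun n => ?_) (hnat0.mul_left ((Real.sqrt 2) ^ t))
    have hle : ((n : ℝ) + 1) / Real.sqrt 2 ≤ jap (n : ℤ) := by
      have := div_le_jap (n : ℤ)
      rwa [show |((n : ℤ) : ℝ)| = (n : ℝ) by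
        push_cast; exact abs_of_nonneg (by positivity), add_comm] at this
    have h2 := Real.rpow_le_rpow_of_nonpos (by positivity) hle (by linarith : -t ≤ 0)
    refine le_trans h2 (le_of_eq ?_)
    rw [Real.div_rpow (by positivity) (by positivity), div_eq_mul_inv,
      Real.rpow_neg (by positivity : (0:ℝ) ≤ Real.sqrt 2), inv_inv, mul_comm]
  apply Summable.of_nat_of_neg hnat
  refine hnat.congr fun n => ?_
  rw [jap_neg]

/-- Finiteness of the double sum `J^KdV` in the trilinear estimate for the modulated KdV. -/
theorem kdv_trilinear_sum_finite (ρ s s0 : ℝ) (hρ : 1 / 2 ≤ ρ) (hs : 0 ≤ s)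
    (h1 : 1 ≤ s + ρ) (h2 : s0 < s + 2 * ρ - 5 / 2) :
    Summable (fun p : ℤ × ℤ =>
      jap p.1 ^ (-(2 * ρ - 2 * s0 - 2)) * jap (p.1 - p.2) ^ (-(2 * ρ - 2 + 2 * s)) *
        jap p.2 ^ (-(2 * ρ + 2 * s))) := by
  set c : ℝ := 2 * ρ - 2 * s0 - 2 with hc
  set a : ℝ := 2 * ρ - 2 + 2 * s with ha
  set b : ℝ := 2 * ρ + 2 * s with hb
  have ha0 : 0 ≤ a := by simp only [ha]; linarith
  have hca : 1 < c + a := by simp only [hc, ha]; linarith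
  -- dominating summable function
  have hg : Summable (fun p : ℤ × ℤ =>
      Real.sqrt 2 ^ a * (jap p.1 ^ (-(c + a)) * jap p.2 ^ (-(2:ℝ)))) := by
    apply Summable.mul_left
    exact (summable_jap_rpow hca).mul_of_nonneg (summable_jap_rpow one_lt_two)
      (fun n => Real.rpow_nonneg (jap_pos _).le _)
      (fun n => Real.rpow_nonneg (jap_pos _).le _)
  apply Summable.of_nonneg_of_le
    (fun p => mul_nonneg (mul_nonneg (Real.rpow_nonneg (jap_pos _).le _)
      (Real.rpow_nonneg (jap_pos _).le _)) (Real.rpow_nonneg (jap_pos _).le _))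
    (fun p => ?_) hg
  -- key pointwise bound
  have hbase : jap p.1 ≤ Real.sqrt 2 * jap p.2 * jap (p.1 - p.2) := by
    have := jap_add_le (p.1 - p.2) p.2
    rw [sub_add_cancel] at this
    calc jap p.1 ≤ Real.sqrt 2 * jap (p.1 - p.2) * jap p.2 := this
      _ = Real.sqrt 2 * jap p.2 * jap (p.1 - p.2) := by ring
  have key : jap (p.1 - p.2) ^ (-a) ≤ (Real.sqrt 2 * jap p.2) ^ a * jap p.1 ^ (-a) := by
    rw [Real.rpow_neg (jap_pos _).le, Real.rpow_neg (jap_pos _).le,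
      ← div_eq_mul_inv, inv_eq_one_div,
      div_le_div_iff₀ (Real.rpow_pos_of_pos (jap_pos _) a) (Real.rpow_pos_of_pos (jap_pos _) a)]
    rw [one_mul, ← Real.mul_rpow (mul_nonneg (Real.sqrt_nonneg 2) (jap_pos _).le) (jap_pos _).le]
    exact Real.rpow_le_rpow (jap_pos _).le hbase ha0
  have e1 : jap p.1 ^ (-c) * jap p.1 ^ (-a) = jap p.1 ^ (-(c + a)) := by
    rw [← Real.rpow_add (jap_pos _)]; ring_nf
  have e2 : jap p.2 ^ a * jap p.2 ^ (-b) = jap p.2 ^ (-(2:ℝ)) := by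
    rw [← Real.rpow_add (jap_pos _)]
    congr 1
    simp only [ha, hb]; ring
  calc jap p.1 ^ (-c) * jap (p.1 - p.2) ^ (-a) * jap p.2 ^ (-b)
      ≤ jap p.1 ^ (-c) * ((Real.sqrt 2 * jap p.2) ^ a * jap p.1 ^ (-a)) * jap p.2 ^ (-b) := by
        apply mul_le_mul_of_nonneg_right _ (Real.rpow_nonneg (jap_pos _).le _)
        exact mul_le_mul_of_nonneg_left key (Real.rpow_nonneg (jap_pos _).le _)
    _ = Real.sqrt 2 ^ a * (jap p.1 ^ (-(c + a)) * jap p.2 ^ (-(2:ℝ))) := by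
        rw [Real.mul_rpow (Real.sqrt_nonneg 2) (jap_pos _).le, ← e1, ← e2]
        ring
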